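/- arXiv:1310.4685 — 2 statements merged into one kernel-verified Lean document; each statement's English description precedes it below -/
import Mathlib

section
/- Fix $-\tfrac12 < \alpha < \tfrac12$ and $k_0 \le k/2$. For the middle sum $B = -\sum_{u=k_0}^{k-k_0-2} \frac{1}{\Gamma^2(\alpha)}\big(u^{\alpha-1}(k-u)^{\alpha-1} - (u+1)^{\alpha-1}(k-u-1)^{\alpha-1}\big)\frac{\chi_0^{2u+2}}{1-\chi_0^2}$, where $\chi_0 = e^{i\theta_0}$ with $\theta_0 \in (0,\pi)$, one has the bound $|B| = O(k_0^{\alpha-1} k^{\alpha-1})$ as $k \to \infty$, uniformly in $k_0$. -/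
/-!
Write `f u = u ^ (α - 1) * (k - u) ^ (α - 1) = (u * (k - u)) ^ (α - 1)`. The summands of `B` are
`f u - f (u + 1)` times factors of constant modulus `1 / (Γ(α)² |1 - χ₀²|)`. Since `α - 1 < 0` and
`u * (k - u)` increases up to `k / 2` and then decreases, `f` is unimodal, so `∑ |f u - f (u + 1)|`
telescopes on each side of `k / 2` and is at most `f k₀ + f (k - k₀ - 1) = f k₀ + f (k₀ + 1) ≤ 2 f k₀`,
which is `O(k₀ ^ (α - 1) * k ^ (α - 1))` because `k - k₀ ≥ k / 2`.
-/

open Finset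

open Real in
theorem rpow_mul_rpow_sub_le_of_add_le {c k x y : ℝ} (hc : c ≤ 0) (hx : 0 < x) (hxy : x ≤ y)
    (hk : x + y ≤ k) : y ^ c * (k - y) ^ c ≤ x ^ c * (k - x) ^ c := by
  rw [← mul_rpow (by linarith) (by linarith), ← mul_rpow hx.le (by linarith)]
  exact rpow_le_rpow_of_nonpos (by nlinarith)
    (by nlinarith [mul_nonneg (sub_nonneg.2 hxy) (sub_nonneg.2 hk)]) hc

theorem rpow_mul_rpow_sub_le_of_le_add {c k x y : ℝ} (hc : c ≤ 0) (hy : y < k) (hxy : x ≤ y)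
    (hk : k ≤ x + y) : x ^ c * (k - x) ^ c ≤ y ^ c * (k - y) ^ c := by
  have := rpow_mul_rpow_sub_le_of_add_le hc (sub_pos.2 hy) (sub_le_sub_left hxy k)
    (by linarith : k - y + (k - x) ≤ k)
  rwa [sub_sub_cancel, sub_sub_cancel, mul_comm, mul_comm ((k - y) ^ c)] at this

open Real in
theorem rpow_mul_rpow_sub_le {c k x : ℝ} (hc : c ≤ 0) (hx : 0 < x) (hk : 2 * x ≤ k) :
    x ^ c * (k - x) ^ c ≤ 2 ^ (-c) * x ^ c * k ^ c := by
  have hhalf : (k - x) ^ c ≤ (k / 2) ^ c := rpow_le_rpow_of_nonpos (by linarith) (by linarith) hc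
  rw [div_rpow (by linarith) zero_le_two, rpow_neg zero_le_two] at *
  calc x ^ c * (k - x) ^ c ≤ x ^ c * (k ^ c / 2 ^ c) := by gcongr
    _ = (2 ^ c)⁻¹ * x ^ c * k ^ c := by ring

theorem sum_Ico_abs_sub_succ_le_add {f : ℕ → ℝ} {a b m : ℕ} (hab : a ≤ b)
    (hf : ∀ u ∈ Icc a b, 0 ≤ f u)
    (hdec : ∀ u ∈ Ico a b, u < m → f (u + 1) ≤ f u)
    (hinc : ∀ u ∈ Ico a b, m ≤ u → f u ≤ f (u + 1)) :
    ∑ u ∈ Ico a b, |f u - f (u + 1)| ≤ f a + f b := by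
  set p := max a (min m b)
  have hap : a ≤ p := le_max_left _ _
  have hpb : p ≤ b := max_le hab (min_le_right _ _)
  have hdown : ∑ u ∈ Ico a p, |f u - f (u + 1)| = f a - f p := by
    rw [← neg_sub, ← sum_Ico_sub _ hap, ← sum_neg_distrib]
    refine sum_congr rfl fun u hu => ?_
    rw [mem_Ico] at hu
    rw [neg_sub, abs_of_nonneg (sub_nonneg.2 (hdec u (mem_Ico.2 ⟨hu.1, by omega⟩) (by omega)))]
  have hup : ∑ u ∈ Ico p b, |f u - f (u + 1)| = f b - f p := by
    rw [← sum_Ico_sub _ hpb]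
    refine sum_congr rfl fun u hu => ?_
    rw [mem_Ico] at hu
    rw [abs_sub_comm, abs_of_nonneg (sub_nonneg.2 (hinc u (mem_Ico.2 ⟨by omega, hu.2⟩) (by omega)))]
  rw [← sum_Ico_consecutive _ hap hpb, hdown, hup]
  linarith [hf p (mem_Icc.2 ⟨hap, hpb⟩)]

theorem norm_sum_mul_exp_mul_I_pow_div_le (s : Finset ℕ) (g : ℝ) (a : ℕ → ℝ) (θ : ℝ)
    (n : ℕ → ℕ) (z : ℂ) :
    ‖∑ u ∈ s, (g : ℂ) * (a u : ℂ) * (Complex.exp (θ * Complex.I) ^ n u / z)‖ ≤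
      |g| / ‖z‖ * ∑ u ∈ s, |a u| := by
  rw [mul_sum]
  refine (norm_sum_le _ _).trans_eq (sum_congr rfl fun u _ => ?_)
  rw [norm_mul, norm_mul, norm_div, norm_pow, Complex.norm_exp_ofReal_mul_I, one_pow,
    Complex.norm_real, Complex.norm_real, Real.norm_eq_abs, Real.norm_eq_abs]
  ring

theorem sum_Icc_abs_sub_rpow_mul_rpow_le {c : ℝ} (hc : c ≤ 0) {k k₀ : ℕ} (hk₀ : 1 ≤ k₀)
    (hk : 2 * k₀ ≤ k) :
    ∑ u ∈ Icc k₀ (k - k₀ - 2),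
        |(u : ℝ) ^ c * ((k : ℝ) - u) ^ c - ((u : ℝ) + 1) ^ c * ((k : ℝ) - u - 1) ^ c| ≤
      2 * ((k₀ : ℝ) ^ c * ((k : ℝ) - k₀) ^ c) := by
  set f : ℕ → ℝ := fun u => (u : ℝ) ^ c * ((k : ℝ) - u) ^ c with hf
  have hf_nonneg : ∀ u ≤ k, 0 ≤ f u := fun u hu =>
    mul_nonneg (Real.rpow_nonneg u.cast_nonneg c)
      (Real.rpow_nonneg (sub_nonneg.2 (by exact_mod_cast hu)) c)
  have hf_symm : ∀ u ≤ k, f (k - u) = f u := fun u hu => by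
    simp only [hf, Nat.cast_sub hu, sub_sub_cancel, mul_comm]
  have hf_dec : ∀ u, 1 ≤ u → 2 * u + 1 ≤ k → f (u + 1) ≤ f u := fun u hu hku => by
    simp only [hf]; push_cast
    exact rpow_mul_rpow_sub_le_of_add_le hc (by exact_mod_cast hu) (by linarith)
      (by exact_mod_cast (by omega : u + (u + 1) ≤ k))
  have hf_inc : ∀ u, u + 1 < k → k ≤ 2 * u → f u ≤ f (u + 1) := fun u hu hku => by
    simp only [hf]; push_cast
    exact rpow_mul_rpow_sub_le_of_le_add hc (by exact_mod_cast hu) (by linarith)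
      (by exact_mod_cast (by omega : k ≤ u + (u + 1)))
  rcases lt_or_ge (k - k₀ - 2) k₀ with hempty | hne
  · rw [Icc_eq_empty_of_lt hempty, sum_empty]
    linarith [hf_nonneg k₀ (by omega)]
  have hIcc : Icc k₀ (k - k₀ - 2) = Ico k₀ (k - (k₀ + 1)) := by
    ext u; simp only [mem_Icc, mem_Ico]; omega
  have hsum : ∑ u ∈ Ico k₀ (k - (k₀ + 1)), |f u - f (u + 1)| ≤ f k₀ + f (k - (k₀ + 1)) :=
    sum_Ico_abs_sub_succ_le_add (m := (k + 1) / 2) (by omega)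
      (fun u hu => hf_nonneg u (by simp only [mem_Icc] at hu; omega))
      (fun u hu hum => hf_dec u (by simp only [mem_Ico] at hu; omega) (by omega))
      (fun u hu hum => hf_inc u (by simp only [mem_Ico] at hu; omega) (by omega))
  rw [hf_symm _ (by omega)] at hsum
  have hend := hf_dec k₀ hk₀ (by omega)
  calc _ = ∑ u ∈ Ico k₀ (k - (k₀ + 1)), |f u - f (u + 1)| := by
        rw [hIcc]
        exact sum_congr rfl fun u _ => by simp only [hf, Nat.cast_add, Nat.cast_one, sub_sub]
    _ ≤ 2 * f k₀ := by linarith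

theorem stmt4_general (α : ℝ) (hα : α ∈ Set.Ioo (-(1/2 : ℝ)) (1/2))
    (θ₀ : ℝ) :
    ∃ C : ℝ, ∀ k k₀ : ℕ, 1 ≤ k₀ → 2 * k₀ ≤ k →
      ‖-(∑ u ∈ Finset.Icc k₀ (k - k₀ - 2),
          (1 / Real.Gamma α ^ 2 : ℝ) *
            (Complex.ofReal ((u : ℝ) ^ (α - 1) * ((k : ℝ) - u) ^ (α - 1) -
              ((u : ℝ) + 1) ^ (α - 1) * ((k : ℝ) - u - 1) ^ (α - 1))) *
            (Complex.exp (θ₀ * Complex.I) ^ (2 * u + 2) /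
              (1 - Complex.exp (θ₀ * Complex.I) ^ 2)))‖ ≤
        C * (k₀ : ℝ) ^ (α - 1) * (k : ℝ) ^ (α - 1) := by
  set M := 1 / Real.Gamma α ^ 2 / ‖1 - Complex.exp (θ₀ * Complex.I) ^ 2‖
  refine ⟨M * (2 * 2 ^ (-(α - 1))), fun k k₀ hk₀ hk => ?_⟩
  have hc : α - 1 ≤ 0 := by linarith [hα.2]
  have hM : 0 ≤ M := by positivity
  rw [norm_neg]
  refine (norm_sum_mul_exp_mul_I_pow_div_le _ _ _ _ _ _).trans ?_
  rw [abs_of_nonneg (by positivity)]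
  calc M * _ ≤ M * (2 * ((k₀ : ℝ) ^ (α - 1) * ((k : ℝ) - k₀) ^ (α - 1))) :=
        mul_le_mul_of_nonneg_left (sum_Icc_abs_sub_rpow_mul_rpow_le hc hk₀ hk) hM
    _ ≤ M * (2 * (2 ^ (-(α - 1)) * (k₀ : ℝ) ^ (α - 1) * (k : ℝ) ^ (α - 1))) := by
        gcongr M * (2 * ?_)
        exact rpow_mul_rpow_sub_le hc (by exact_mod_cast hk₀)
          (by exact_mod_cast hk : 2 * (k₀ : ℝ) ≤ k)
    _ = M * (2 * 2 ^ (-(α - 1))) * (k₀ : ℝ) ^ (α - 1) * (k : ℝ) ^ (α - 1) := by ring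

/-- bound on the middle sum `B` in the proof of Lemma `PRELI`:
`|B| = O(k₀^{α-1} k^{α-1})`, uniformly in `k₀`. -/
theorem stmt4 (α : ℝ) (hα : α ∈ Set.Ioo (-(1/2 : ℝ)) (1/2))
    (θ₀ : ℝ) (hθ₀ : θ₀ ∈ Set.Ioo 0 Real.pi) :
    ∃ C : ℝ, ∀ k k₀ : ℕ, 1 ≤ k₀ → 2 * k₀ ≤ k →
      ‖-(∑ u ∈ Finset.Icc k₀ (k - k₀ - 2),
          (1 / Real.Gamma α ^ 2 : ℝ) *
            (Complex.ofReal ((u : ℝ) ^ (α - 1) * ((k : ℝ) - u) ^ (α - 1) -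
              ((u : ℝ) + 1) ^ (α - 1) * ((k : ℝ) - u - 1) ^ (α - 1))) *
            (Complex.exp (θ₀ * Complex.I) ^ (2 * u + 2) /
              (1 - Complex.exp (θ₀ * Complex.I) ^ 2)))‖ ≤
        C * (k₀ : ℝ) ^ (α - 1) * (k : ℝ) ^ (α - 1) :=
  stmt4_general α hα θ₀
end

section
/- Let $\alpha \in (-\tfrac12, \tfrac12)$, $N \ge 1$, $\delta \in (0,1)$, and let $F: [0,\delta] \to \mathbb{R}$ be a function satisfying $|F(z)| \le K_0(1 + |\ln(1 - z + \tfrac{1+\alpha}{N})|)$ for all $z \in [0,\delta]$. Suppose furthermore that $F$ is obtained as a sum over $n \ge 0$ of nonnegative terms of the form $a_n \cdot \frac{1}{1 + \frac{1+\alpha}{N} + \frac{n}{N} - z}$ where $\sum_n a_n < \infty$. Then for all $z, z' \in [0,\delta]$: $|F(z) - F(z')| \le |z - z'| \cdot \frac{K_0(1 + |\ln(1-\delta+\frac{1+\alpha}{N})|)}{1-\delta}$. -/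
/-!
For `z, z' ≤ δ`, `|aₙ/(cₙ - z) - aₙ/(cₙ - z')| = aₙ |z - z'| / ((cₙ - z)(cₙ - z'))`, and since every
pole satisfies `cₙ ≥ 1`, one factor of the denominator is at least `1 - δ` and the other at least
`cₙ - δ`. Summing, `F` is Lipschitz on `[0, δ]` with constant `F(δ) / (1 - δ)`, uniformly in `N`,
and `F(δ) ≤ |F(δ)|` is controlled by the logarithmic bound at `z = δ`.
-/

theorem abs_div_sub_sub_div_sub_le {a c z z' δ m : ℝ} (ha : 0 ≤ a) (hm : 0 < m)
    (hc : m ≤ c - δ) (hz : z ≤ δ) (hz' : z' ≤ δ) :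
    |a / (c - z) - a / (c - z')| ≤ |z - z'| / m * (a / (c - δ)) := by
  have hcz : m ≤ c - z := by linarith
  have hcz' : c - δ ≤ c - z' := by linarith
  have hcδ : 0 < c - δ := hm.trans_le hc
  have hdiff : a / (c - z) - a / (c - z') = a * (z - z') / ((c - z) * (c - z')) := by
    field_simp [(hm.trans_le hcz).ne', (hcδ.trans_le hcz').ne']
    ring
  have hrhs : |z - z'| / m * (a / (c - δ)) = a * |z - z'| / (m * (c - δ)) := by
    field_simp
  rw [hdiff, hrhs, abs_div, abs_mul, abs_of_nonneg ha,
    abs_of_pos (mul_pos (hm.trans_le hcz) (hcδ.trans_le hcz'))]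
  gcongr
  linarith

theorem summable_div_sub_of_le {a c : ℕ → ℝ} {z m : ℝ} (ha : ∀ n, 0 ≤ a n) (hsum : Summable a)
    (hm : 0 < m) (hc : ∀ n, m ≤ c n - z) : Summable fun n => a n / (c n - z) :=
  (hsum.div_const m).of_nonneg_of_le (fun n => div_nonneg (ha n) (hm.trans_le (hc n)).le)
    (fun n => div_le_div_of_nonneg_left (ha n) hm (hc n))

theorem abs_tsum_div_sub_sub_tsum_div_sub_le {a c : ℕ → ℝ} {z z' δ m : ℝ}
    (ha : ∀ n, 0 ≤ a n) (hsum : Summable a) (hm : 0 < m) (hc : ∀ n, m ≤ c n - δ)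
    (hz : z ≤ δ) (hz' : z' ≤ δ) :
    |∑' n, a n / (c n - z) - ∑' n, a n / (c n - z')| ≤
      |z - z'| / m * ∑' n, a n / (c n - δ) := by
  have summable_at {w : ℝ} (hw : w ≤ δ) : Summable fun n => a n / (c n - w) :=
    summable_div_sub_of_le ha hsum hm fun n => (hc n).trans (by linarith)
  have hterm n := abs_div_sub_sub_div_sub_le (ha n) hm (hc n) hz hz'
  have hbound : Summable fun n => |z - z'| / m * (a n / (c n - δ)) :=
    (summable_at le_rfl).mul_left _
  have habs : Summable fun n => |a n / (c n - z) - a n / (c n - z')| :=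
    hbound.of_nonneg_of_le (fun _ => abs_nonneg _) hterm
  rw [← (summable_at hz).tsum_sub (summable_at hz'), ← tsum_mul_left]
  calc |∑' n, (a n / (c n - z) - a n / (c n - z'))|
      ≤ ∑' n, |a n / (c n - z) - a n / (c n - z')| :=
        norm_tsum_le_tsum_norm (f := fun n => a n / (c n - z) - a n / (c n - z')) habs
    _ ≤ ∑' n, |z - z'| / m * (a n / (c n - δ)) :=
        habs.tsum_le_tsum hterm hbound

theorem stmt9_general (α : ℝ) (hα : α ∈ Set.Ioo (-(1/2 : ℝ)) (1/2))
    (N : ℕ) (δ : ℝ) (hδ : δ ∈ Set.Ioo (0:ℝ) 1)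
    (K₀ : ℝ) (a : ℕ → ℝ) (ha : ∀ n, 0 ≤ a n) (hsum : Summable a)
    (F : ℝ → ℝ)
    (hF : ∀ z, F z = ∑' n : ℕ, a n / (1 + (1 + α) / N + (n : ℝ) / N - z))
    (hFbound : ∀ z ∈ Set.Icc (0:ℝ) δ,
      |F z| ≤ K₀ * (1 + |Real.log (1 - z + (1 + α) / N)|)) :
    ∀ z ∈ Set.Icc (0:ℝ) δ, ∀ z' ∈ Set.Icc (0:ℝ) δ,
      |F z - F z'| ≤
        |z - z'| * (K₀ * (1 + |Real.log (1 - δ + (1 + α) / N)|)) / (1 - δ) := by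
  intro z hz z' hz'
  have hpoles : ∀ n : ℕ, 1 - δ ≤ 1 + (1 + α) / N + (n : ℝ) / N - δ := fun n => by
    have : 0 ≤ (1 + α) / N := div_nonneg (by linarith [hα.1]) N.cast_nonneg
    have : 0 ≤ (n : ℝ) / N := by positivity
    linarith
  have hFδ : F δ ≤ K₀ * (1 + |Real.log (1 - δ + (1 + α) / N)|) :=
    (le_abs_self _).trans (hFbound δ ⟨hδ.1.le, le_rfl⟩)
  calc |F z - F z'| ≤ |z - z'| / (1 - δ) * F δ := by
        simpa only [← hF] using abs_tsum_div_sub_sub_tsum_div_sub_le ha hsum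
          (sub_pos.2 hδ.2) hpoles hz.2 hz'.2
    _ ≤ |z - z'| / (1 - δ) * (K₀ * (1 + |Real.log (1 - δ + (1 + α) / N)|)) := by
        gcongr
        exact div_nonneg (abs_nonneg _) (sub_pos.2 hδ.2).le
    _ = |z - z'| * (K₀ * (1 + |Real.log (1 - δ + (1 + α) / N)|)) / (1 - δ) := by ring

/-- a uniform (in `N`) Lipschitz bound for the functions
`F(z) = ∑ₙ aₙ / (1 + (1+α)/N + n/N - z)` on `[0,δ]`, given the logarithmic
bound `|F(z)| ≤ K₀(1 + |ln(1-z+(1+α)/N)|)`. -/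
theorem stmt9 (α : ℝ) (hα : α ∈ Set.Ioo (-(1/2 : ℝ)) (1/2))
    (N : ℕ) (hN : 1 ≤ N) (δ : ℝ) (hδ : δ ∈ Set.Ioo (0:ℝ) 1)
    (K₀ : ℝ) (a : ℕ → ℝ) (ha : ∀ n, 0 ≤ a n) (hsum : Summable a)
    (F : ℝ → ℝ)
    (hF : ∀ z, F z = ∑' n : ℕ, a n / (1 + (1 + α) / N + (n : ℝ) / N - z))
    (hFbound : ∀ z ∈ Set.Icc (0:ℝ) δ,
      |F z| ≤ K₀ * (1 + |Real.log (1 - z + (1 + α) / N)|)) :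
    ∀ z ∈ Set.Icc (0:ℝ) δ, ∀ z' ∈ Set.Icc (0:ℝ) δ,
      |F z - F z'| ≤
        |z - z'| * (K₀ * (1 + |Real.log (1 - δ + (1 + α) / N)|)) / (1 - δ) :=
  stmt9_general α hα N δ hδ K₀ a ha hsum F hF hFbound
end
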